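/- arXiv:2601.10869 — 3 statements merged into one kernel-verified Lean document; each statement's English description precedes it below -/
import Mathlib

section
/- Let D be an n×n real symmetric positive semidefinite matrix, d ∈ ℝⁿ, and λ ∈ ℝ with λ > ‖D‖. Suppose w* := −(D − λI)⁻¹d satisfies ‖w*‖ = 1. Then w* maximizes V(w) = ½wᵀDw + wᵀd over the unit sphere {w : ‖w‖ = 1}, i.e., V(w) ≤ V(w*) for every w with ‖w‖ = 1, and V(w*) = −½ dᵀ(D − λI)⁻¹ d + λ/2. -/
/-!
Since `λ > ‖D‖`, the matrix `A = λI - D` is positive definite, and `w* = A⁻¹ d` is the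
stationary point `A w* = d`.  Substituting `d = A w*` and using symmetry of `D`, for every `u`
with `‖u‖ = ‖w*‖` one gets `V(w*) - V(u) = ½ (u - w*)ᵀ A (u - w*) ≥ 0`.  The same substitution
gives `w*ᵀ d = λ - w*ᵀ D w*`, hence `V(w*) = (λ + w*ᵀ d) / 2`, which is the claimed value.
-/

open Matrix

/-- The induced 2-norm (operator norm) of a real matrix, via its action on Euclidean space. -/
noncomputable def l2n {a b : ℕ} (M : Matrix (Fin a) (Fin b) ℝ) : ℝ :=
  ‖LinearMap.toContinuousLinearMap (Matrix.toEuclideanLin M)‖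

lemma dotProduct_mulVec_le_l2n_mul {n : ℕ} (D : Matrix (Fin n) (Fin n) ℝ) (x : Fin n → ℝ) :
    x ⬝ᵥ D *ᵥ x ≤ l2n D * (x ⬝ᵥ x) := by
  set f := LinearMap.toContinuousLinearMap (Matrix.toEuclideanLin D)
  set y : EuclideanSpace ℝ (Fin n) := WithLp.toLp 2 x
  have hfy : f y = WithLp.toLp 2 (D *ᵥ x) := rfl
  have hnorm : ‖y‖ ^ 2 = x ⬝ᵥ x := by
    rw [← real_inner_self_eq_norm_sq, EuclideanSpace.inner_toLp_toLp, star_trivial]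
  calc x ⬝ᵥ D *ᵥ x = inner ℝ y (f y) := by
        rw [hfy, EuclideanSpace.inner_toLp_toLp, star_trivial, dotProduct_comm]
    _ ≤ ‖y‖ * ‖f y‖ := real_inner_le_norm _ _
    _ ≤ ‖y‖ * (‖f‖ * ‖y‖) := by gcongr; exact f.le_opNorm y
    _ = l2n D * (x ⬝ᵥ x) := by rw [← hnorm, l2n]; ring

lemma posDef_smul_one_sub_of_l2n_lt {n : ℕ} {D : Matrix (Fin n) (Fin n) ℝ} {lam : ℝ}
    (hD : D.IsHermitian) (hlam : l2n D < lam) :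
    (lam • (1 : Matrix (Fin n) (Fin n) ℝ) - D).PosDef := by
  refine posDef_iff_dotProduct_mulVec.mpr
    ⟨(isHermitian_one.smul (IsSelfAdjoint.all lam)).sub hD, fun x hx => ?_⟩
  have hxx : 0 < x ⬝ᵥ x := by simpa using dotProduct_self_star_pos_iff.mpr hx
  have hnorm : 0 ≤ l2n D := norm_nonneg _
  rw [star_trivial, sub_mulVec, smul_mulVec, one_mulVec, dotProduct_sub, dotProduct_smul,
    smul_eq_mul]
  nlinarith [dotProduct_mulVec_le_l2n_mul D x]

section

variable {n : Type*} [Fintype n] [DecidableEq n]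

noncomputable def quadObjective (D : Matrix n n ℝ) (d w : n → ℝ) : ℝ :=
  1 / 2 * (w ⬝ᵥ D *ᵥ w) + w ⬝ᵥ d

variable {D : Matrix n n ℝ} {d u w : n → ℝ} {lam : ℝ}

lemma quadObjective_sub_quadObjective_of_stationary (hD : D.IsHermitian)
    (hw : (lam • 1 - D) *ᵥ w = d) (hu : u ⬝ᵥ u = w ⬝ᵥ w) :
    quadObjective D d w - quadObjective D d u =
      1 / 2 * ((u - w) ⬝ᵥ (lam • 1 - D) *ᵥ (u - w)) := by
  have hsymm : w ⬝ᵥ D *ᵥ u = u ⬝ᵥ D *ᵥ w := by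
    rw [dotProduct_mulVec, ← vecMul_transpose, ← conjTranspose_eq_transpose_of_trivial, hD.eq,
      dotProduct_comm]
  subst hw
  simp only [quadObjective, sub_mulVec, smul_mulVec, one_mulVec, mulVec_sub, dotProduct_sub,
    sub_dotProduct, dotProduct_smul, smul_eq_mul, dotProduct_comm w u, hsymm, hu]
  ring

lemma quadObjective_le_of_stationary (hA : (lam • 1 - D).PosSemidef)
    (hw : (lam • 1 - D) *ᵥ w = d) (hu : u ⬝ᵥ u = w ⬝ᵥ w) :
    quadObjective D d u ≤ quadObjective D d w := by
  have hD : D.IsHermitian := by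
    simpa using (isHermitian_one.smul (IsSelfAdjoint.all lam)).sub hA.1
  have hquad := hA.dotProduct_mulVec_nonneg (u - w)
  rw [star_trivial] at hquad
  linarith [quadObjective_sub_quadObjective_of_stationary hD hw hu]

lemma quadObjective_eq_of_stationary (hw : (lam • 1 - D) *ᵥ w = d) (hww : w ⬝ᵥ w = 1) :
    quadObjective D d w = (lam + w ⬝ᵥ d) / 2 := by
  subst hw
  simp only [quadObjective, sub_mulVec, smul_mulVec, one_mulVec, dotProduct_sub, dotProduct_smul,
    smul_eq_mul, hww]
  ring

end

/-- **Optimality of the stationary point on the unit sphere.**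
Let `D ⪰ 0`, `λ > ‖D‖`, and suppose `w* = −(D − λI)⁻¹d` has unit norm.  Then `w*`
maximizes `V(w) = ½wᵀDw + wᵀd` over the unit sphere, with optimal value
`−½ dᵀ(D − λI)⁻¹ d + λ/2`. -/
theorem sphere_quadratic_optimizer {n : ℕ}
    (D : Matrix (Fin n) (Fin n) ℝ) (d : Fin n → ℝ) (lam : ℝ)
    (hD : D.PosSemidef) (hlam : l2n D < lam)
    (hw : ∑ i, (-(((D - lam • (1 : Matrix (Fin n) (Fin n) ℝ))⁻¹).mulVec d)) i ^ 2 = 1) :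
    (∀ w : Fin n → ℝ, ∑ i, w i ^ 2 = 1 →
      (1 / 2) * (w ⬝ᵥ D.mulVec w) + w ⬝ᵥ d ≤
        (1 / 2) * ((-(((D - lam • (1 : Matrix (Fin n) (Fin n) ℝ))⁻¹).mulVec d)) ⬝ᵥ
            D.mulVec (-(((D - lam • (1 : Matrix (Fin n) (Fin n) ℝ))⁻¹).mulVec d))) +
          (-(((D - lam • (1 : Matrix (Fin n) (Fin n) ℝ))⁻¹).mulVec d)) ⬝ᵥ d) ∧
    (1 / 2) * ((-(((D - lam • (1 : Matrix (Fin n) (Fin n) ℝ))⁻¹).mulVec d)) ⬝ᵥ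
        D.mulVec (-(((D - lam • (1 : Matrix (Fin n) (Fin n) ℝ))⁻¹).mulVec d))) +
      (-(((D - lam • (1 : Matrix (Fin n) (Fin n) ℝ))⁻¹).mulVec d)) ⬝ᵥ d =
    -(1 / 2) * (d ⬝ᵥ ((D - lam • (1 : Matrix (Fin n) (Fin n) ℝ))⁻¹).mulVec d) + lam / 2 := by
  set w := -((D - lam • (1 : Matrix (Fin n) (Fin n) ℝ))⁻¹ *ᵥ d)
  have hA := posDef_smul_one_sub_of_l2n_lt hD.1 hlam
  have hdet : IsUnit (D - lam • 1).det := by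
    rw [← isUnit_iff_isUnit_det, ← neg_sub]
    exact hA.isUnit.neg
  have hstat : (lam • 1 - D) *ᵥ w = d := by
    rw [← neg_sub D, neg_mulVec, mulVec_neg, neg_neg, mulVec_mulVec, mul_nonsing_inv _ hdet,
      one_mulVec]
  have sum_sq : ∀ x : Fin n → ℝ, ∑ i, x i ^ 2 = x ⬝ᵥ x := fun x => by
    simp [dotProduct, sq]
  rw [sum_sq] at hw
  refine ⟨fun u hu => quadObjective_le_of_stationary hA.posSemidef hstat ?_, ?_⟩
  · rwa [sum_sq, ← hw] at hu
  · change quadObjective D d w = _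
    rw [quadObjective_eq_of_stationary hstat hw, neg_dotProduct, dotProduct_comm]
    ring
end

section
/- Let M₁₁ be an m×m real symmetric positive definite matrix, M₂₂ a q×q real symmetric matrix, and M₁₂ an m×q real matrix such that the block matrix M(0) = [[M₁₁, M₁₂],[M₁₂ᵀ, M₂₂]] is positive semidefinite. Define the Schur complement M̃₁₁ = M₂₂ − M₁₂ᵀM₁₁⁻¹M₁₂. If ‖M̃₁₁‖ < ‖M₂₂‖, then the matrix M(‖M₂₂‖) = [[M₁₁, M₁₂],[M₁₂ᵀ, M₂₂ − ‖M₂₂‖·I]] is invertible. -/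
/-!
Since `M₁₁` is invertible, `M(c)` is invertible iff its Schur complement
`(M₂₂ - c I) - M₁₂ᵀ M₁₁⁻¹ M₁₂ = -(c I - M̃₁₁)` is. For `c = ‖M₂₂‖ > ‖M̃₁₁‖` the number `c`
lies outside the spectrum of `M̃₁₁`, because the spectrum of a matrix is that of the operator it
defines on Euclidean space, which is contained in the ball of radius the operator norm.
-/

open Matrix

theorem l2n_eq_norm_toEuclideanCLM {n : ℕ} (A : Matrix (Fin n) (Fin n) ℝ) :
    l2n A = ‖toEuclideanCLM (𝕜 := ℝ) A‖ := rfl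

theorem notMem_spectrum_of_l2n_lt {n : ℕ} {A : Matrix (Fin n) (Fin n) ℝ} {c : ℝ}
    (h : l2n A < c) : c ∉ spectrum ℝ A := by
  rw [← AlgEquiv.spectrum_eq (toEuclideanCLM (n := Fin n) (𝕜 := ℝ)) A]
  intro hc
  have h_one : ‖(1 : EuclideanSpace ℝ (Fin n) →L[ℝ] EuclideanSpace ℝ (Fin n))‖ ≤ 1 :=
    ContinuousLinearMap.norm_id_le
  have h_le : ‖c‖ ≤ l2n A := by
    rw [l2n_eq_norm_toEuclideanCLM]
    exact (spectrum.norm_le_norm_mul_of_mem hc).trans (mul_le_of_le_one_right (norm_nonneg _) h_one)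
  linarith [Real.le_norm_self c]

theorem isUnit_smul_one_sub_of_l2n_lt {n : ℕ} {A : Matrix (Fin n) (Fin n) ℝ} {c : ℝ}
    (h : l2n A < c) : IsUnit (c • (1 : Matrix (Fin n) (Fin n) ℝ) - A) := by
  simpa only [Algebra.algebraMap_eq_smul_one] using
    spectrum.notMem_iff.mp (notMem_spectrum_of_l2n_lt h)

theorem invertible_at_critical_general {m q : ℕ}
    (M11 : Matrix (Fin m) (Fin m) ℝ) (M12 : Matrix (Fin m) (Fin q) ℝ)
    (M22 : Matrix (Fin q) (Fin q) ℝ)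
    (hM11 : M11.PosDef)
    (hSchur : l2n (M22 - M12ᵀ * M11⁻¹ * M12) < l2n M22) :
    IsUnit (Matrix.fromBlocks M11 M12 M12ᵀ
      (M22 - l2n M22 • (1 : Matrix (Fin q) (Fin q) ℝ))) := by
  have : Invertible M11 := invertibleOfIsUnitDet M11 hM11.det_pos.ne'.isUnit
  rw [isUnit_fromBlocks_iff_of_invertible₁₁, invOf_eq_nonsing_inv]
  have h_schur_shift : M22 - l2n M22 • 1 - M12ᵀ * M11⁻¹ * M12
      = -(l2n M22 • 1 - (M22 - M12ᵀ * M11⁻¹ * M12)) := by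
    abel
  rw [h_schur_shift, IsUnit.neg_iff]
  exact isUnit_smul_one_sub_of_l2n_lt hSchur

/-- **Invertibility at the critical multiplier when the Schur complement is strictly
smaller.**  If `M(0) = [[M₁₁, M₁₂],[M₁₂ᵀ, M₂₂]] ⪰ 0`, `M₁₁ ≻ 0`, and
`‖M₂₂ − M₁₂ᵀM₁₁⁻¹M₁₂‖ < ‖M₂₂‖`, then `M(‖M₂₂‖) = [[M₁₁, M₁₂],[M₁₂ᵀ, M₂₂ − ‖M₂₂‖I]]`
is invertible. -/
theorem invertible_at_critical {m q : ℕ}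
    (M11 : Matrix (Fin m) (Fin m) ℝ) (M12 : Matrix (Fin m) (Fin q) ℝ)
    (M22 : Matrix (Fin q) (Fin q) ℝ)
    (hM11 : M11.PosDef) (hM22 : M22.IsHermitian)
    (hM0 : (Matrix.fromBlocks M11 M12 M12ᵀ M22).PosSemidef)
    (hSchur : l2n (M22 - M12ᵀ * M11⁻¹ * M12) < l2n M22) :
    IsUnit (Matrix.fromBlocks M11 M12 M12ᵀ
      (M22 - l2n M22 • (1 : Matrix (Fin q) (Fin q) ℝ))) :=
  invertible_at_critical_general M11 M12 M22 hM11 hSchur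
end

section
/- Let A be n×n, B n×m, G n×q real matrices, Q an n×n real symmetric positive semidefinite matrix, R an m×m real symmetric positive definite matrix, and P an n×n real symmetric positive semidefinite matrix. For λ > ‖GᵀPG‖ define M(λ) = [[BᵀPB + R, BᵀPG],[GᵀPB, GᵀPG − λI]] (which is invertible) and Π(λ) = Q + AᵀPA − AᵀP[B G] M(λ)⁻¹ [B G]ᵀ PA. Then the function (λ, x) ↦ ½ xᵀΠ(λ)x is jointly convex on the convex set {λ ∈ ℝ : λ > ‖GᵀPG‖} × ℝⁿ. -/
/-!
`½ xᵀΠ(λ)x` is the value of a min-max game with cost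
`J(λ, x, u, w) = ½ (xᵀQx + (Ax + Bu + Gw)ᵀP(Ax + Bu + Gw) + uᵀRu - λ wᵀw)`.
The best response `u*(x, w)` to a disturbance `w` is affine in `x` and independent of `λ`, so each
`(λ, x) ↦ J(λ, x, u*(x, w), w)` is jointly convex. Completing the square at the stationary point
`z₀ = (u₀, w₀) = -M(λ)⁻¹ [B G]ᵀPAx` of `J` gives `J(λ, x, u*(x, w), w) ≤ ½ xᵀΠ(λ)x`, with
equality at `w = w₀`; the sign comes from `BᵀPB + R ≥ 0` and `GᵀPG - λ ≤ 0`.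
So `½ xᵀΠ(λ)x` is an attained supremum of jointly convex functions.
-/

open Matrix

/-- The block matrix `M_k = [[BᵀPB + R, BᵀPG],[GᵀPB, GᵀPG − λI]]`. -/
noncomputable def Mmat {n m q : ℕ} (B : Matrix (Fin n) (Fin m) ℝ) (G : Matrix (Fin n) (Fin q) ℝ)
    (R : Matrix (Fin m) (Fin m) ℝ) (P : Matrix (Fin n) (Fin n) ℝ) (lam : ℝ) :
    Matrix (Fin m ⊕ Fin q) (Fin m ⊕ Fin q) ℝ :=
  Matrix.fromBlocks (Bᵀ * P * B + R) (Bᵀ * P * G) (Gᵀ * P * B)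
    (Gᵀ * P * G - lam • (1 : Matrix (Fin q) (Fin q) ℝ))

/-- One step of the Riccati-type recursion:
`Q + AᵀPA − AᵀP[B G] M⁻¹ [B G]ᵀ PA`. -/
noncomputable def riccStep {n m q : ℕ} (A : Matrix (Fin n) (Fin n) ℝ)
    (B : Matrix (Fin n) (Fin m) ℝ) (G : Matrix (Fin n) (Fin q) ℝ)
    (Q : Matrix (Fin n) (Fin n) ℝ) (R : Matrix (Fin m) (Fin m) ℝ)
    (P : Matrix (Fin n) (Fin n) ℝ) (lam : ℝ) : Matrix (Fin n) (Fin n) ℝ :=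
  Q + Aᵀ * P * A -
    Aᵀ * P * Matrix.fromCols B G * (Mmat B G R P lam)⁻¹ * (Matrix.fromCols B G)ᵀ * P * A

theorem convexOn_of_forall_le_of_exists_eq {𝕜 E β ι : Type*} [Semiring 𝕜] [PartialOrder 𝕜]
    [AddCommMonoid E] [AddCommMonoid β] [PartialOrder β] [IsOrderedAddMonoid β] [SMul 𝕜 E]
    [Module 𝕜 β] [PosSMulMono 𝕜 β] {s : Set E} {f : E → β} (hs : Convex 𝕜 s)
    (g : ι → E → β) (hg : ∀ i, ConvexOn 𝕜 s (g i)) (hle : ∀ i, ∀ x ∈ s, g i x ≤ f x)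
    (hex : ∀ x ∈ s, ∃ i, g i x = f x) : ConvexOn 𝕜 s f := by
  refine ⟨hs, fun x hx y hy a b ha hb hab => ?_⟩
  obtain ⟨i, hi⟩ := hex _ (hs hx hy ha hb hab)
  calc f (a • x + b • y) = g i (a • x + b • y) := hi.symm
    _ ≤ a • g i x + b • g i y := (hg i).2 hx hy ha hb hab
    _ ≤ a • f x + b • f y := by gcongr <;> exact hle i _ ‹_›

section CommRing

variable {R ι κ : Type*} [CommRing R] [Fintype ι] [Fintype κ]

theorem Matrix.IsSymm.dotProduct_mulVec_comm {P : Matrix ι ι R} (hP : P.IsSymm) (x y : ι → R) :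
    x ⬝ᵥ P *ᵥ y = y ⬝ᵥ P *ᵥ x := by
  rw [← dotProduct_transpose_mulVec, hP.eq]

theorem sumElim_dotProduct_fromBlocks_mulVec_sumElim (S : Matrix ι ι R) (E : Matrix ι κ R)
    (D : Matrix κ κ R) {u : ι → R} {w : κ → R} (h : S *ᵥ u + E *ᵥ w = 0) :
    Sum.elim u w ⬝ᵥ fromBlocks S E Eᵀ D *ᵥ Sum.elim u w = w ⬝ᵥ D *ᵥ w - u ⬝ᵥ S *ᵥ u := by
  have hcross : w ⬝ᵥ Eᵀ *ᵥ u = -(u ⬝ᵥ S *ᵥ u) := by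
    have hu := congrArg (u ⬝ᵥ ·) h
    simp only [dotProduct_add, dotProduct_zero] at hu
    rw [dotProduct_transpose_mulVec]
    linear_combination hu
  rw [fromBlocks_mulVec, Sum.elim_comp_inl, Sum.elim_comp_inr, sumElim_dotProduct_sumElim, h,
    dotProduct_zero, dotProduct_add, hcross]
  ring

variable {P : Matrix ι ι R} {C : Matrix ι κ R} {D : Matrix κ κ R} {a : ι → R} {z₀ : κ → R}

theorem quadratic_value_of_stationary (hstat : Cᵀ *ᵥ (P *ᵥ (a + C *ᵥ z₀)) + D *ᵥ z₀ = 0) :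
    (a + C *ᵥ z₀) ⬝ᵥ P *ᵥ (a + C *ᵥ z₀) + z₀ ⬝ᵥ D *ᵥ z₀ = a ⬝ᵥ P *ᵥ (a + C *ᵥ z₀) := by
  have h := congrArg (z₀ ⬝ᵥ ·) hstat
  simp only [dotProduct_add, dotProduct_zero, dotProduct_transpose_mulVec] at h
  rw [add_dotProduct, add_assoc, dotProduct_comm (C *ᵥ z₀), h, add_zero]

theorem quadratic_add_of_stationary (hP : P.IsSymm) (hD : D.IsSymm)
    (hstat : Cᵀ *ᵥ (P *ᵥ (a + C *ᵥ z₀)) + D *ᵥ z₀ = 0) (d : κ → R) :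
    (a + C *ᵥ (z₀ + d)) ⬝ᵥ P *ᵥ (a + C *ᵥ (z₀ + d)) + (z₀ + d) ⬝ᵥ D *ᵥ (z₀ + d)
      = (a + C *ᵥ z₀) ⬝ᵥ P *ᵥ (a + C *ᵥ z₀) + z₀ ⬝ᵥ D *ᵥ z₀
        + d ⬝ᵥ (Cᵀ * P * C + D) *ᵥ d := by
  have h := congrArg (d ⬝ᵥ ·) hstat
  simp only [dotProduct_add, dotProduct_zero, dotProduct_transpose_mulVec] at h
  rw [mulVec_add, ← add_assoc]
  set y₀ := a + C *ᵥ z₀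
  simp only [mulVec_add, add_mulVec, dotProduct_add, add_dotProduct, ← mulVec_mulVec,
    dotProduct_transpose_mulVec, hP.dotProduct_mulVec_comm y₀, hD.dotProduct_mulVec_comm z₀]
  rw [dotProduct_comm (P *ᵥ y₀)] at h
  rw [dotProduct_comm (P *ᵥ C *ᵥ d)]
  linear_combination 2 * h

end CommRing

theorem Matrix.PosSemidef.isSymm {ι : Type*} {P : Matrix ι ι ℝ} (hP : P.PosSemidef) :
    P.IsSymm :=
  isHermitian_iff_isSymm.1 hP.isHermitian

section Real

variable {ι κ : Type*} [Fintype ι] [Fintype κ]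

theorem Matrix.PosSemidef.transpose_mul_mul_same {P : Matrix ι ι ℝ} (hP : P.PosSemidef)
    (B : Matrix ι κ ℝ) : (Bᵀ * P * B).PosSemidef := by
  simpa using hP.conjTranspose_mul_mul_same B

theorem Matrix.PosSemidef.transpose_mul_mul_add_posDef {P : Matrix ι ι ℝ} (hP : P.PosSemidef)
    (B : Matrix ι κ ℝ) {R : Matrix κ κ ℝ} (hR : R.PosDef) : (Bᵀ * P * B + R).PosDef :=
  PosDef.posSemidef_add (hP.transpose_mul_mul_same B) hR

theorem Matrix.PosSemidef.convexOn_dotProduct_mulVec {S : Matrix ι ι ℝ} (hS : S.PosSemidef) :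
    ConvexOn ℝ Set.univ fun v : ι → ℝ => v ⬝ᵥ S *ᵥ v := by
  refine ⟨convex_univ, fun x _ y _ a b ha hb hab => ?_⟩
  have hxy := hS.dotProduct_mulVec_nonneg (x - y)
  simp only [star_trivial] at hxy
  have hb' : b = 1 - a := by linarith
  subst hb'
  simp only [smul_eq_mul, mulVec_add, mulVec_smul, mulVec_sub, dotProduct_add, add_dotProduct,
    dotProduct_smul, smul_dotProduct, dotProduct_sub, sub_dotProduct] at hxy ⊢
  nlinarith [mul_nonneg (mul_nonneg ha hb) hxy]

theorem Matrix.PosSemidef.convexOn_dotProduct_mulVec_affine {S : Matrix ι ι ℝ}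
    (hS : S.PosSemidef) (L : Matrix ι κ ℝ) (c : ι → ℝ) :
    ConvexOn ℝ Set.univ fun v : κ → ℝ => (L *ᵥ v + c) ⬝ᵥ S *ᵥ (L *ᵥ v + c) := by
  let φ : (κ → ℝ) →ᵃ[ℝ] (ι → ℝ) := L.mulVecLin.toAffineMap + AffineMap.const ℝ _ c
  exact hS.convexOn_dotProduct_mulVec.comp_affineMap φ

theorem isUnit_fromBlocks_of_posDef [DecidableEq ι] [DecidableEq κ] {S : Matrix ι ι ℝ}
    (hS : S.PosDef) (E : Matrix ι κ ℝ) {D : Matrix κ κ ℝ} (hD : (-D).PosDef) :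
    IsUnit (fromBlocks S E Eᵀ D) := by
  rw [← mulVec_injective_iff_isUnit]
  suffices h : ∀ z, fromBlocks S E Eᵀ D *ᵥ z = 0 → z = 0 from
    fun z z' hzz => sub_eq_zero.1 (h _ (by rw [mulVec_sub, hzz, sub_self]))
  intro z hz
  rw [← Sum.elim_comp_inl_inr z] at hz ⊢
  set u := z ∘ Sum.inl
  set w := z ∘ Sum.inr
  have hrow : S *ᵥ u + E *ᵥ w = 0 := by
    simpa [fromBlocks_mulVec] using congrArg (· ∘ Sum.inl) hz
  have hquad := sumElim_dotProduct_fromBlocks_mulVec_sumElim S E D hrow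
  rw [hz, dotProduct_zero] at hquad
  have hSu := hS.posSemidef.dotProduct_mulVec_nonneg u
  have hDw := hD.posSemidef.dotProduct_mulVec_nonneg w
  simp only [star_trivial, neg_mulVec, dotProduct_neg] at hSu hDw
  have hu : u = 0 := by
    by_contra hu
    have := hS.dotProduct_mulVec_pos hu
    simp only [star_trivial] at this
    linarith
  have hw : w = 0 := by
    by_contra hw
    have := hD.dotProduct_mulVec_pos hw
    simp only [star_trivial, neg_mulVec, dotProduct_neg] at this
    linarith
  rw [hu, hw, Sum.elim_zero_zero]

end Real

open scoped RealInnerProductSpace in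
theorem dotProduct_mulVec_le_l2n {a : ℕ} (M : Matrix (Fin a) (Fin a) ℝ) (x : Fin a → ℝ) :
    x ⬝ᵥ M *ᵥ x ≤ l2n M * (x ⬝ᵥ x) := by
  let v : EuclideanSpace ℝ (Fin a) := WithLp.toLp 2 x
  have hnorm : ‖v‖ ^ 2 = x ⬝ᵥ x := by
    rw [← real_inner_self_eq_norm_sq, EuclideanSpace.inner_eq_star_dotProduct]
    simp [v]
  calc x ⬝ᵥ M *ᵥ x = ⟪v, Matrix.toEuclideanCLM (𝕜 := ℝ) M v⟫ := (inner_toEuclideanCLM M v v).symm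
    _ ≤ ‖v‖ * ‖Matrix.toEuclideanCLM (𝕜 := ℝ) M v‖ := real_inner_le_norm _ _
    _ ≤ ‖v‖ * (l2n M * ‖v‖) := by gcongr; exact (Matrix.toEuclideanCLM (𝕜 := ℝ) M).le_opNorm v
    _ = l2n M * (x ⬝ᵥ x) := by rw [← hnorm]; ring

theorem posSemidef_l2n_smul_one_sub {a : ℕ} {T : Matrix (Fin a) (Fin a) ℝ} (hT : T.IsSymm) :
    (l2n T • (1 : Matrix (Fin a) (Fin a) ℝ) - T).PosSemidef := by
  refine PosSemidef.of_dotProduct_mulVec_nonneg ?_ fun x => ?_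
  · simp [IsHermitian, transpose_sub, hT.eq]
  · simp only [star_trivial, sub_mulVec, dotProduct_sub, smul_mulVec, one_mulVec,
      dotProduct_smul, smul_eq_mul, sub_nonneg]
    exact dotProduct_mulVec_le_l2n T x

theorem posDef_smul_one_sub_of_l2n_lt_s16 {a : ℕ} {T : Matrix (Fin a) (Fin a) ℝ} (hT : T.IsSymm)
    {lam : ℝ} (hlam : l2n T < lam) : (lam • (1 : Matrix (Fin a) (Fin a) ℝ) - T).PosDef := by
  have h := (PosDef.one.smul (sub_pos.2 hlam)).add_posSemidef
    (posSemidef_l2n_smul_one_sub hT)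
  rwa [sub_smul, sub_add_sub_cancel] at h

section Riccati

variable {n m q : ℕ} (A : Matrix (Fin n) (Fin n) ℝ) (B : Matrix (Fin n) (Fin m) ℝ)
  (G : Matrix (Fin n) (Fin q) ℝ) (Q : Matrix (Fin n) (Fin n) ℝ) (R : Matrix (Fin m) (Fin m) ℝ)
  (P : Matrix (Fin n) (Fin n) ℝ)

noncomputable def riccCost (lam : ℝ) (x : Fin n → ℝ) (u : Fin m → ℝ) (w : Fin q → ℝ) : ℝ :=
  (1 / 2) * (x ⬝ᵥ Q *ᵥ x + (A *ᵥ x + B *ᵥ u + G *ᵥ w) ⬝ᵥ P *ᵥ (A *ᵥ x + B *ᵥ u + G *ᵥ w)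
    + u ⬝ᵥ R *ᵥ u - lam * (w ⬝ᵥ w))

noncomputable def riccSaddle (lam : ℝ) (x : Fin n → ℝ) : Fin m ⊕ Fin q → ℝ :=
  -((Mmat B G R P lam)⁻¹ *ᵥ ((fromCols B G)ᵀ *ᵥ (P *ᵥ (A *ᵥ x))))

noncomputable def bestControl (x : Fin n → ℝ) (w : Fin q → ℝ) : Fin m → ℝ :=
  -((Bᵀ * P * B + R)⁻¹ *ᵥ ((Bᵀ * P * G) *ᵥ w + Bᵀ *ᵥ (P *ᵥ (A *ᵥ x))))

theorem riccCost_eq_sumElim (lam : ℝ) (x : Fin n → ℝ) (u : Fin m → ℝ) (w : Fin q → ℝ) :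
    riccCost A B G Q R P lam x u w = (1 / 2) * (x ⬝ᵥ Q *ᵥ x +
      ((A *ᵥ x + fromCols B G *ᵥ Sum.elim u w) ⬝ᵥ P *ᵥ (A *ᵥ x + fromCols B G *ᵥ Sum.elim u w)
        + Sum.elim u w ⬝ᵥ fromBlocks R 0 0 (-lam • 1) *ᵥ Sum.elim u w)) := by
  simp only [riccCost, fromCols_mulVec_sumElim, fromBlocks_mulVec, Sum.elim_comp_inl,
    Sum.elim_comp_inr, sumElim_dotProduct_sumElim, zero_mulVec, add_zero, zero_add,
    neg_smul, neg_mulVec, smul_mulVec, one_mulVec, dotProduct_neg, dotProduct_smul, smul_eq_mul,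
    add_assoc]
  ring

theorem Mmat_eq_transpose_mul_add (lam : ℝ) :
    Mmat B G R P lam = (fromCols B G)ᵀ * P * fromCols B G + fromBlocks R 0 0 (-lam • 1) := by
  rw [Mmat, transpose_fromCols, fromRows_mul, fromRows_mul_fromCols, fromBlocks_add]
  simp only [add_zero, sub_eq_add_neg, neg_smul]

theorem Mmat_eq_fromBlocks (hP : P.IsSymm) (lam : ℝ) :
    Mmat B G R P lam
      = fromBlocks (Bᵀ * P * B + R) (Bᵀ * P * G) (Bᵀ * P * G)ᵀ (Gᵀ * P * G - lam • 1) := by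
  rw [Mmat, transpose_mul, transpose_mul, hP.eq, transpose_transpose, Matrix.mul_assoc Gᵀ]

variable {A B G Q R P} {lam : ℝ}

theorem isUnit_Mmat (hR : R.PosDef) (hP : P.PosSemidef) (hlam : l2n (Gᵀ * P * G) < lam) :
    IsUnit (Mmat B G R P lam) := by
  rw [Mmat_eq_fromBlocks B G R P hP.isSymm]
  refine isUnit_fromBlocks_of_posDef (hP.transpose_mul_mul_add_posDef B hR) _ ?_
  rw [neg_sub]
  exact posDef_smul_one_sub_of_l2n_lt_s16 (hP.transpose_mul_mul_same G).isSymm hlam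

theorem Mmat_mulVec_riccSaddle (hR : R.PosDef) (hP : P.PosSemidef)
    (hlam : l2n (Gᵀ * P * G) < lam) (x : Fin n → ℝ) :
    Mmat B G R P lam *ᵥ riccSaddle A B G R P lam x = -((fromCols B G)ᵀ *ᵥ (P *ᵥ (A *ᵥ x))) := by
  rw [riccSaddle, mulVec_neg, mulVec_mulVec, mul_nonsing_inv _
    ((isUnit_iff_isUnit_det _).1 (isUnit_Mmat hR hP hlam)), one_mulVec]

theorem riccSaddle_stationary (hR : R.PosDef) (hP : P.PosSemidef)
    (hlam : l2n (Gᵀ * P * G) < lam) (x : Fin n → ℝ) :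
    (fromCols B G)ᵀ *ᵥ (P *ᵥ (A *ᵥ x + fromCols B G *ᵥ riccSaddle A B G R P lam x))
      + fromBlocks R 0 0 (-lam • 1) *ᵥ riccSaddle A B G R P lam x = 0 := by
  have h := Mmat_mulVec_riccSaddle (A := A) (B := B) hR hP hlam x
  rw [Mmat_eq_transpose_mul_add, add_mulVec, ← mulVec_mulVec, ← mulVec_mulVec] at h
  rw [mulVec_add, mulVec_add]
  linear_combination h

theorem riccSaddle_first_row (hR : R.PosDef) (hP : P.PosSemidef)
    (hlam : l2n (Gᵀ * P * G) < lam) (x : Fin n → ℝ) :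
    (Bᵀ * P * B + R) *ᵥ (riccSaddle A B G R P lam x ∘ Sum.inl)
      + (Bᵀ * P * G) *ᵥ (riccSaddle A B G R P lam x ∘ Sum.inr) = -(Bᵀ *ᵥ (P *ᵥ (A *ᵥ x))) := by
  have h := Mmat_mulVec_riccSaddle (A := A) (B := B) hR hP hlam x
  rw [Mmat_eq_fromBlocks B G R P hP.isSymm, fromBlocks_mulVec, transpose_fromCols,
    fromRows_mulVec] at h
  funext i
  simpa using congrFun h (Sum.inl i)

theorem mulVec_bestControl (hR : R.PosDef) (hP : P.PosSemidef) (x : Fin n → ℝ)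
    (w : Fin q → ℝ) :
    (Bᵀ * P * B + R) *ᵥ bestControl A B G R P x w + (Bᵀ * P * G) *ᵥ w
      = -(Bᵀ *ᵥ (P *ᵥ (A *ᵥ x))) := by
  rw [bestControl, mulVec_neg, mulVec_mulVec, mul_nonsing_inv _
    ((isUnit_iff_isUnit_det _).1 (hP.transpose_mul_mul_add_posDef B hR).isUnit), one_mulVec]
  abel

theorem bestControl_riccSaddle (hR : R.PosDef) (hP : P.PosSemidef)
    (hlam : l2n (Gᵀ * P * G) < lam) (x : Fin n → ℝ) :
    bestControl A B G R P x (riccSaddle A B G R P lam x ∘ Sum.inr)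
      = riccSaddle A B G R P lam x ∘ Sum.inl := by
  set z₀ := riccSaddle A B G R P lam x
  have h : (Bᵀ * P * B + R) *ᵥ bestControl A B G R P x (z₀ ∘ Sum.inr)
        + (Bᵀ * P * G) *ᵥ (z₀ ∘ Sum.inr)
      = (Bᵀ * P * B + R) *ᵥ (z₀ ∘ Sum.inl) + (Bᵀ * P * G) *ᵥ (z₀ ∘ Sum.inr) :=
    (mulVec_bestControl hR hP x _).trans (riccSaddle_first_row hR hP hlam x).symm
  exact mulVec_injective_iff_isUnit.2 (hP.transpose_mul_mul_add_posDef B hR).isUnit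
    (add_right_cancel h)

theorem dotProduct_riccStep_mulVec (x : Fin n → ℝ) :
    x ⬝ᵥ riccStep A B G Q R P lam *ᵥ x
      = x ⬝ᵥ Q *ᵥ x + (A *ᵥ x) ⬝ᵥ P *ᵥ (A *ᵥ x + fromCols B G *ᵥ riccSaddle A B G R P lam x) := by
  simp only [riccStep, riccSaddle, sub_mulVec, add_mulVec, ← mulVec_mulVec, mulVec_add,
    mulVec_neg, dotProduct_add, dotProduct_sub, dotProduct_neg, dotProduct_transpose_mulVec]
  rw [dotProduct_comm (P *ᵥ A *ᵥ x), dotProduct_comm (P *ᵥ _)]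
  ring

theorem riccCost_riccSaddle (hR : R.PosDef) (hP : P.PosSemidef)
    (hlam : l2n (Gᵀ * P * G) < lam) (x : Fin n → ℝ) :
    riccCost A B G Q R P lam x (riccSaddle A B G R P lam x ∘ Sum.inl)
      (riccSaddle A B G R P lam x ∘ Sum.inr) = (1 / 2) * (x ⬝ᵥ riccStep A B G Q R P lam *ᵥ x) := by
  rw [riccCost_eq_sumElim, Sum.elim_comp_inl_inr,
    quadratic_value_of_stationary (riccSaddle_stationary hR hP hlam x), dotProduct_riccStep_mulVec]


theorem riccCost_bestControl_le (hR : R.PosDef) (hP : P.PosSemidef)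
    (hlam : l2n (Gᵀ * P * G) < lam) (x : Fin n → ℝ) (w : Fin q → ℝ) :
    riccCost A B G Q R P lam x (bestControl A B G R P x w) w
      ≤ (1 / 2) * (x ⬝ᵥ riccStep A B G Q R P lam *ᵥ x) := by
  set z₀ := riccSaddle A B G R P lam x
  set du := bestControl A B G R P x w - z₀ ∘ Sum.inl
  set dw := w - z₀ ∘ Sum.inr
  have hrow : (Bᵀ * P * B + R) *ᵥ du + (Bᵀ * P * G) *ᵥ dw = 0 := by
    rw [mulVec_sub, mulVec_sub, sub_add_sub_comm, mulVec_bestControl hR hP,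
      riccSaddle_first_row hR hP hlam, sub_self]
  have hsplit : Sum.elim (bestControl A B G R P x w) w = z₀ + Sum.elim du dw := by
    ext (i | j) <;> simp [du, dw]
  have hS := (hP.transpose_mul_mul_add_posDef B hR).posSemidef.dotProduct_mulVec_nonneg du
  have hD := (posDef_smul_one_sub_of_l2n_lt_s16 (hP.transpose_mul_mul_same G).isSymm
    hlam).posSemidef.dotProduct_mulVec_nonneg dw
  simp only [star_trivial] at hS hD
  rw [← neg_sub, neg_mulVec, dotProduct_neg] at hD
  calc riccCost A B G Q R P lam x (bestControl A B G R P x w) w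
      = riccCost A B G Q R P lam x (z₀ ∘ Sum.inl) (z₀ ∘ Sum.inr)
        + (1 / 2) * (dw ⬝ᵥ (Gᵀ * P * G - lam • 1) *ᵥ dw - du ⬝ᵥ (Bᵀ * P * B + R) *ᵥ du) := by
        rw [riccCost_eq_sumElim, riccCost_eq_sumElim, Sum.elim_comp_inl_inr, hsplit,
          quadratic_add_of_stationary hP.isSymm
            (.fromBlocks hR.posSemidef.isSymm transpose_zero (isSymm_one.smul _))
            (riccSaddle_stationary hR hP hlam x),
          ← Mmat_eq_transpose_mul_add, Mmat_eq_fromBlocks B G R P hP.isSymm,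
          sumElim_dotProduct_fromBlocks_mulVec_sumElim _ _ _ hrow]
        ring
    _ ≤ riccCost A B G Q R P lam x (z₀ ∘ Sum.inl) (z₀ ∘ Sum.inr) := by linarith
    _ = (1 / 2) * (x ⬝ᵥ riccStep A B G Q R P lam *ᵥ x) := riccCost_riccSaddle hR hP hlam x


theorem convexOn_riccCost_bestControl (hQ : Q.PosSemidef) (hR : R.PosSemidef)
    (hP : P.PosSemidef) (w : Fin q → ℝ) :
    ConvexOn ℝ Set.univ fun p : ℝ × (Fin n → ℝ) =>
      riccCost A B G Q R P p.1 p.2 (bestControl A B G R P p.2 w) w := by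
  set K := -((Bᵀ * P * B + R)⁻¹ * (Bᵀ * P * A))
  set k := -((Bᵀ * P * B + R)⁻¹ *ᵥ ((Bᵀ * P * G) *ᵥ w))
  have hu : ∀ x, bestControl A B G R P x w = K *ᵥ x + k := fun x => by
    simp only [bestControl, K, k, mulVec_add, ← mulVec_mulVec, neg_mulVec, neg_add]
    abel
  have hx : ∀ x, A *ᵥ x + B *ᵥ (K *ᵥ x + k) + G *ᵥ w = (A + B * K) *ᵥ x + (B *ᵥ k + G *ᵥ w) :=
    fun x => by simp only [add_mulVec, mulVec_add, mulVec_mulVec]; abel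
  have hstate := ((hQ.convexOn_dotProduct_mulVec.add
    (hP.convexOn_dotProduct_mulVec_affine (A + B * K) (B *ᵥ k + G *ᵥ w))).add
    (hR.convexOn_dotProduct_mulVec_affine K k)).comp_linearMap (LinearMap.snd ℝ ℝ (Fin n → ℝ))
  have hlam := ((-(w ⬝ᵥ w)) • LinearMap.fst ℝ ℝ (Fin n → ℝ)).convexOn convex_univ
  refine (((Set.preimage_univ ▸ hstate).add hlam).smul (by norm_num : (0 : ℝ) ≤ 1 / 2)).congr
    fun p _ => ?_
  simp only [riccCost, hu, hx, Function.comp, LinearMap.snd_apply, LinearMap.smul_apply,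
    LinearMap.fst_apply, smul_eq_mul, Pi.add_apply]
  ring

end Riccati

/-- **Joint convexity of the Riccati-step quadratic form.**
For `λ > ‖GᵀPG‖`, `M(λ)` is invertible and
`Π(λ) = Q + AᵀPA − AᵀP[B G] M(λ)⁻¹ [B G]ᵀ PA` is well defined; the map
`(λ, x) ↦ ½ xᵀΠ(λ)x` is jointly convex on `{λ : λ > ‖GᵀPG‖} × ℝⁿ`. -/
theorem riccati_quadratic_jointly_convex {n m q : ℕ}
    (A : Matrix (Fin n) (Fin n) ℝ) (B : Matrix (Fin n) (Fin m) ℝ)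
    (G : Matrix (Fin n) (Fin q) ℝ)
    (Q : Matrix (Fin n) (Fin n) ℝ) (R : Matrix (Fin m) (Fin m) ℝ)
    (P : Matrix (Fin n) (Fin n) ℝ)
    (hQ : Q.PosSemidef) (hR : R.PosDef) (hP : P.PosSemidef) :
    ConvexOn ℝ {p : ℝ × (Fin n → ℝ) | l2n (Gᵀ * P * G) < p.1}
      (fun p => (1 / 2) * (p.2 ⬝ᵥ (riccStep A B G Q R P p.1).mulVec p.2)) := by
  have hs : Convex ℝ {p : ℝ × (Fin n → ℝ) | l2n (Gᵀ * P * G) < p.1} :=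
    (convex_Ioi _).linear_preimage (LinearMap.fst ℝ ℝ (Fin n → ℝ))
  refine convexOn_of_forall_le_of_exists_eq hs
    (fun w p => riccCost A B G Q R P p.1 p.2 (bestControl A B G R P p.2 w) w)
    (fun w => (convexOn_riccCost_bestControl hQ hR.posSemidef hP w).subset (Set.subset_univ _) hs)
    (fun w p hp => riccCost_bestControl_le hR hP hp p.2 w)
    (fun p hp => ⟨riccSaddle A B G R P p.1 p.2 ∘ Sum.inr, ?_⟩)
  rw [bestControl_riccSaddle hR hP hp, riccCost_riccSaddle hR hP hp]
end
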